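/- arXiv:1012.3726 — 2 statements merged into one kernel-verified Lean document; each statement's English description precedes it below -/
import Mathlib

section
/- The contour pair (C_f, L_{f,ℓ}) determines the well-labeled forest (f, ℓ) uniquely: if two well-labeled forests have the same contour function and spatial contour function, they are equal. -/
/-- A forest with `t` trees, in Bettinelli's formalism: a finite set of nonempty lists of
positive integers (a list `[u₁, …, uₙ]` encodes the vertex `u₁…uₙ ∈ ⋃ₖ ℕᵏ`) such that
the floor is `{1, …, t+1}`, parents of elements belong to the forest, children of any
vertex form an initial segment `{1, …, c}` of ℕ, and the last floor vertex `t+1` has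
no children. -/
def IsForest (f : Finset (List ℕ)) (t : ℕ) : Prop :=
  1 ≤ t ∧
  (∀ u ∈ f, u ≠ []) ∧
  (∀ j : ℕ, ([j] ∈ f ↔ 1 ≤ j ∧ j ≤ t + 1)) ∧
  (∀ u ∈ f, 2 ≤ u.length → u.dropLast ∈ f) ∧
  (∀ u ∈ f, ∃ c : ℕ, ∀ i : ℕ, (u ++ [i] ∈ f ↔ 1 ≤ i ∧ i ≤ c)) ∧
  (∀ i : ℕ, [t + 1, i] ∉ f)

/-- `F i` has a child in `f` that has not yet appeared in the sequence `F 0, …, F i`. -/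
def HasNewChild (f : Finset (List ℕ)) (F : ℕ → List ℕ) (i : ℕ) : Prop :=
  ∃ j : ℕ, F i ++ [j] ∈ f ∧ ∀ k ≤ i, F k ≠ F i ++ [j]

/-- One step of the facial (depth-first contour) exploration: if `F i` has a child not yet
visited, go to the first such child; otherwise, if `F i` is not on the floor, go to its
parent; otherwise move to the next tree root. -/
def FacialStep (f : Finset (List ℕ)) (F : ℕ → List ℕ) (i : ℕ) : Prop :=
  (∃ j : ℕ, F (i + 1) = F i ++ [j] ∧ F i ++ [j] ∈ f ∧ (∀ k ≤ i, F k ≠ F i ++ [j]) ∧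
      ∀ j' < j, F i ++ [j'] ∈ f → ∃ k ≤ i, F k = F i ++ [j']) ∨
  (¬ HasNewChild f F i ∧ 2 ≤ (F i).length ∧ F (i + 1) = (F i).dropLast) ∨
  (¬ HasNewChild f F i ∧ (F i).length = 1 ∧ F (i + 1) = [(F i).headI + 1])

/-- `F` is the facial sequence of the forest `f` up to time `N`. -/
def IsFacialSeq (f : Finset (List ℕ)) (F : ℕ → List ℕ) (N : ℕ) : Prop :=
  F 0 = [1] ∧ ∀ i < N, FacialStep f F i

/-- `ℓ` is an admissible labeling of the forest `f`: labels vanish on the floor and differ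
by at most `1` along every tree edge and every floor edge. -/
def IsWellLabeled (f : Finset (List ℕ)) (ℓ : List ℕ → ℤ) : Prop :=
  (∀ j : ℕ, [j] ∈ f → ℓ [j] = 0) ∧
  (∀ u ∈ f, 2 ≤ u.length → |ℓ u - ℓ u.dropLast| ≤ 1) ∧
  (∀ j : ℕ, [j] ∈ f → [j + 1] ∈ f → |ℓ [j] - ℓ [j + 1]| ≤ 1)

namespace ContourAux

lemma headI_concat (l : List ℕ) (j : ℕ) (h : l ≠ []) : (l ++ [j]).headI = l.headI := by
  cases l with
  | nil => exact absurd rfl h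
  | cons a l => rfl

lemma headI_dropLast (l : List ℕ) (h : 2 ≤ l.length) : l.dropLast.headI = l.headI := by
  match l, h with
  | a :: b :: l, _ => simp [List.dropLast]

lemma prefix_singleton {p : List ℕ} {a : ℕ} (h : p <+: [a]) (hne : p ≠ []) : p = [a] := by
  have h1 := h.length_le
  have h2 : 1 ≤ p.length := by
    cases p with
    | nil => exact absurd rfl hne
    | cons x l => simp
  have h3 : p.length = 1 := by simpa using le_antisymm (by simpa using h1) h2
  exact h.eq_of_length (by simp [h3])

section Forest

variable {f : Finset (List ℕ)} {t m N : ℕ} {F : ℕ → List ℕ}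

/-- number of down-steps before time `i` -/
def D (F : ℕ → List ℕ) (i : ℕ) : ℕ :=
  ((Finset.range i).filter (fun k => (F (k+1)).length = (F k).length + 1)).card

lemma D_succ (F : ℕ → List ℕ) (n : ℕ) :
    D F (n+1) = D F n + if (F (n+1)).length = (F n).length + 1 then 1 else 0 := by
  unfold D
  rw [Finset.range_add_one, Finset.filter_insert]
  split
  · rw [Finset.card_insert_of_notMem (by simp)]
  · rfl

lemma F_ne_nil (h0 : F 0 = [1]) (hstep : ∀ i < N, FacialStep f F i) :
    ∀ i ≤ N, F i ≠ [] := by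
  intro i hi
  induction i with
  | zero => simp [h0]
  | succ n ih =>
    have hn : n < N := by omega
    have hne := ih (by omega)
    rcases hstep n hn with ⟨j, hj, _⟩ | ⟨_, hlen, heq⟩ | ⟨_, hlen, heq⟩
    · rw [hj]; simp
    · rw [heq]; intro hc
      have := congrArg List.length hc
      simp [List.length_dropLast] at this
      omega
    · rw [heq]; simp

/-- classification of a facial step, with length and head information. -/
lemma step_classify (h0 : F 0 = [1]) (hstep : ∀ i < N, FacialStep f F i)
    {i : ℕ} (hi : i < N) :
    ((∃ j, F (i+1) = F i ++ [j] ∧ F i ++ [j] ∈ f ∧ (∀ k ≤ i, F k ≠ F i ++ [j]) ∧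
       ∀ j' < j, F i ++ [j'] ∈ f → ∃ k ≤ i, F k = F i ++ [j']) ∧
       (F (i+1)).length = (F i).length + 1 ∧ (F (i+1)).headI = (F i).headI) ∨
    ((¬ HasNewChild f F i ∧ 2 ≤ (F i).length ∧ F (i+1) = (F i).dropLast) ∧
       (F (i+1)).length + 1 = (F i).length ∧ (F (i+1)).headI = (F i).headI) ∨
    ((¬ HasNewChild f F i ∧ (F i).length = 1 ∧ F (i+1) = [(F i).headI + 1]) ∧
       (F (i+1)).length = 1 ∧ (F (i+1)).headI = (F i).headI + 1) := by
  have hne : F i ≠ [] := F_ne_nil h0 hstep i (by omega)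
  rcases hstep i hi with ⟨j, hj, hmem, hnew, hmin⟩ | ⟨h1, h2, h3⟩ | ⟨h1, h2, h3⟩
  · left
    refine ⟨⟨j, hj, hmem, hnew, hmin⟩, ?_, ?_⟩
    · rw [hj]; simp
    · rw [hj]; exact headI_concat _ _ hne
  · right; left
    refine ⟨⟨h1, h2, h3⟩, ?_, ?_⟩
    · rw [h3, List.length_dropLast]; omega
    · rw [h3]; exact headI_dropLast _ h2
  · right; right
    exact ⟨⟨h1, h2, h3⟩, by rw [h3]; simp, by rw [h3]; rfl⟩

/-- if a step increases the length, it is a down-step (branch 1). -/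
lemma down_branch (h0 : F 0 = [1]) (hstep : ∀ i < N, FacialStep f F i)
    {i : ℕ} (hi : i < N) (hd : (F (i+1)).length = (F i).length + 1) :
    ∃ j, F (i+1) = F i ++ [j] ∧ F i ++ [j] ∈ f ∧ (∀ k ≤ i, F k ≠ F i ++ [j]) ∧
       ∀ j' < j, F i ++ [j'] ∈ f → ∃ k ≤ i, F k = F i ++ [j'] := by
  have hne : F i ≠ [] := F_ne_nil h0 hstep i (by omega)
  have hlen : 1 ≤ (F i).length := by
    cases hFi : F i with
    | nil => exact absurd hFi hne
    | cons a l => simp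
  rcases step_classify h0 hstep hi with ⟨h, _⟩ | ⟨⟨_, hl, _⟩, hl2, _⟩ | ⟨⟨_, hl, _⟩, hl2, _⟩
  · exact h
  · omega
  · omega

/-- the basic contour identity: `i + |F i| = 2 * D i + headI (F i)`. -/
lemma contour_identity (h0 : F 0 = [1]) (hstep : ∀ i < N, FacialStep f F i) :
    ∀ i ≤ N, i + (F i).length = 2 * D F i + (F i).headI := by
  intro i hi
  induction i with
  | zero => simp [h0, D]
  | succ n ih =>
    have hn : n < N := by omega
    have IH := ih (by omega)
    have hD := D_succ F n
    rcases step_classify h0 hstep hn with ⟨_, hl, hh⟩ | ⟨_, hl, hh⟩ | ⟨⟨_, hl1, _⟩, hl, hh⟩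
    · rw [if_pos hl] at hD; omega
    · rw [if_neg (by omega)] at hD; omega
    · rw [if_neg (by omega)] at hD; omega

/-- every nonempty prefix of a visited vertex has been visited before. -/
lemma prefix_visited (h0 : F 0 = [1]) (hstep : ∀ i < N, FacialStep f F i) :
    ∀ i ≤ N, ∀ p, p ≠ [] → p <+: F i → ∃ k ≤ i, F k = p := by
  intro i hi
  induction i with
  | zero =>
    intro p hp hpre
    rw [h0] at hpre
    exact ⟨0, le_refl 0, by rw [h0, prefix_singleton hpre hp]⟩
  | succ n ih =>
    have hn : n < N := by omega
    have IH := ih (by omega)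
    intro p hp hpre
    rcases hstep n hn with ⟨j, hj, _⟩ | ⟨_, _, heq⟩ | ⟨_, _, heq⟩
    · rw [hj] at hpre
      by_cases hc : p.length ≤ (F n).length
      · have : p <+: F n :=
          List.prefix_of_prefix_length_le hpre (List.prefix_append _ _) hc
        obtain ⟨k, hk, hkeq⟩ := IH p hp this
        exact ⟨k, by omega, hkeq⟩
      · have hlen := hpre.length_le
        simp at hlen
        have : p = F n ++ [j] := hpre.eq_of_length (by simp; omega)
        exact ⟨n+1, le_refl _, by rw [hj, this]⟩
    · rw [heq] at hpre
      have : p <+: F n := hpre.trans (List.dropLast_prefix _)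
      obtain ⟨k, hk, hkeq⟩ := IH p hp this
      exact ⟨k, by omega, hkeq⟩
    · rw [heq] at hpre
      exact ⟨n+1, le_refl _, by rw [heq, prefix_singleton hpre hp]⟩

/-- all floor vertices up to the current head have been visited. -/
lemma roots_visited (h0 : F 0 = [1]) (hstep : ∀ i < N, FacialStep f F i) :
    ∀ i ≤ N, ∀ j, 1 ≤ j → j ≤ (F i).headI → ∃ k ≤ i, F k = [j] := by
  intro i hi
  induction i with
  | zero =>
    intro j h1 h2
    rw [h0] at h2; simp at h2
    have : j = 1 := by omega
    exact ⟨0, le_refl 0, by rw [h0, this]⟩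
  | succ n ih =>
    have hn : n < N := by omega
    have IH := ih (by omega)
    intro j h1 h2
    rcases step_classify h0 hstep hn with ⟨_, _, hh⟩ | ⟨_, _, hh⟩ | ⟨⟨_, _, heq⟩, _, hh⟩
    · rw [hh] at h2
      obtain ⟨k, hk, hkeq⟩ := IH j h1 h2
      exact ⟨k, by omega, hkeq⟩
    · rw [hh] at h2
      obtain ⟨k, hk, hkeq⟩ := IH j h1 h2
      exact ⟨k, by omega, hkeq⟩
    · rw [hh] at h2
      by_cases hc : j ≤ (F n).headI
      · obtain ⟨k, hk, hkeq⟩ := IH j h1 hc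
        exact ⟨k, by omega, hkeq⟩
      · have : j = (F n).headI + 1 := by omega
        exact ⟨n+1, le_refl _, by rw [heq, this]⟩

/-- as long as `[t+1]` has not been visited, the sequence stays in the forest with head `≤ t`. -/
lemma mem_of_ne (hf : IsForest f t) (h0 : F 0 = [1]) (hstep : ∀ i < N, FacialStep f F i) :
    ∀ i ≤ N, (∀ k ≤ i, F k ≠ [t+1]) → ∀ k ≤ i, F k ∈ f ∧ (F k).headI ≤ t := by
  intro i hi hno
  induction i with
  | zero =>
    intro k hk
    have hk0 : k = 0 := by omega
    subst hk0
    rw [h0]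
    exact ⟨(hf.2.2.1 1).mpr ⟨le_refl 1, by omega⟩, by simpa using hf.1⟩
  | succ n ih =>
    have hn : n < N := by omega
    have IH : ∀ k ≤ n, F k ∈ f ∧ (F k).headI ≤ t :=
      ih (by omega) (fun k hk => hno k (by omega))
    intro k hk
    rcases Nat.lt_succ_iff_lt_or_eq.mp (Nat.lt_succ_of_le hk) with h | h
    · exact IH k (by omega)
    · subst h
      obtain ⟨hFn, hhn⟩ := IH n (le_refl n)
      rcases step_classify h0 hstep hn with ⟨⟨j, hj, hmem, _⟩, _, hh⟩ | ⟨⟨_, hl, heq⟩, _, hh⟩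
        | ⟨⟨_, hl, heq⟩, _, hh⟩
      · rw [hj]
        exact ⟨hmem, by rw [← hj, hh]; exact hhn⟩
      · exact ⟨by rw [heq]; exact hf.2.2.2.1 (F n) hFn hl, by rw [hh]; exact hhn⟩
      · have hle : (F n).headI + 1 ≤ t + 1 := by omega
        have hmem : F (n+1) ∈ f := by
          rw [heq]
          exact (hf.2.2.1 _).mpr ⟨by omega, hle⟩
        refine ⟨hmem, ?_⟩
        have hne : F (n+1) ≠ [t+1] := hno (n+1) (le_refl _)
        have hx : (F n).headI + 1 ≠ t + 1 := fun hcon => hne (by rw [heq, hcon])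
        rw [hh]
        omega

lemma card_nonroot (hf : IsForest f t) (hcard : f.card = m + t + 1) :
    (f.filter (fun u => 2 ≤ u.length)).card = m := by
  classical
  have h1 : f.filter (fun u => ¬ 2 ≤ u.length) = (Finset.Icc 1 (t+1)).image (fun j => [j]) := by
    ext u
    simp only [Finset.mem_filter, Finset.mem_image, Finset.mem_Icc]
    constructor
    · rintro ⟨hu, hlen⟩
      have hne := hf.2.1 u hu
      match u with
      | [] => exact absurd rfl hne
      | [a] => exact ⟨a, (hf.2.2.1 a).mp hu, rfl⟩
      | a :: b :: l => simp at hlen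
    · rintro ⟨j, hj, rfl⟩
      exact ⟨(hf.2.2.1 j).mpr hj, by simp⟩
  have hinj : Function.Injective (fun j : ℕ => [j]) := by
    intro a b h; injection h
  have h2 : ((Finset.Icc 1 (t+1)).image (fun j => [j])).card = t + 1 := by
    rw [Finset.card_image_of_injective _ hinj]
    simp
  have h3 := Finset.card_filter_add_card_filter_not
    (s := f) (p := fun u => 2 ≤ u.length)
  rw [h1, h2] at h3
  omega

/-- the number of down-steps is at most the number of non-floor vertices. -/
lemma D_le (hf : IsForest f t) (hcard : f.card = m + t + 1)
    (h0 : F 0 = [1]) (hstep : ∀ i < N, FacialStep f F i) :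
    ∀ i ≤ N, D F i ≤ m := by
  classical
  intro i hi
  have key : ∀ k ∈ (Finset.range i).filter (fun k => (F (k+1)).length = (F k).length + 1),
      ∃ j, F (k+1) = F k ++ [j] ∧ F k ++ [j] ∈ f ∧ (∀ k' ≤ k, F k' ≠ F k ++ [j]) := by
    intro k hk
    simp only [Finset.mem_filter, Finset.mem_range] at hk
    obtain ⟨j, hj, hmem, hnew, _⟩ := down_branch h0 hstep (by omega) hk.2
    exact ⟨j, hj, hmem, hnew⟩
  have hmaps : ∀ k ∈ (Finset.range i).filter (fun k => (F (k+1)).length = (F k).length + 1),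
      F (k+1) ∈ f.filter (fun u => 2 ≤ u.length) := by
    intro k hk
    obtain ⟨j, hj, hmem, _⟩ := key k hk
    rw [hj]
    refine Finset.mem_filter.mpr ⟨hmem, ?_⟩
    have hne : F k ≠ [] := by
      simp only [Finset.mem_filter, Finset.mem_range] at hk
      exact F_ne_nil h0 hstep k (by omega)
    have : 1 ≤ (F k).length := by
      cases hFk : F k with
      | nil => exact absurd hFk hne
      | cons a l => simp
    simp; omega
  have hinj : Set.InjOn (fun k => F (k+1))
      ((Finset.range i).filter (fun k => (F (k+1)).length = (F k).length + 1) : Finset ℕ) := by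
    intro a ha b hb hab
    simp only [Finset.coe_filter, Set.mem_setOf_eq, Finset.mem_range] at ha hb
    by_contra hne
    rcases Nat.lt_or_ge a b with h | h
    · obtain ⟨j, hj, _, hnew⟩ := key b (by simp [Finset.mem_filter, hb.1, hb.2])
      exact hnew (a+1) (by omega) (by rw [← hj]; exact hab)
    · have h' : b < a := by omega
      obtain ⟨j, hj, _, hnew⟩ := key a (by simp [Finset.mem_filter, ha.1, ha.2])
      exact hnew (b+1) (by omega) (by rw [← hj]; exact hab.symm)
  calc D F i ≤ (f.filter (fun u => 2 ≤ u.length)).card :=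
        Finset.card_le_card_of_injOn _ hmaps hinj
    _ = m := card_nonroot hf hcard

lemma length_pos_of_ne_nil {l : List ℕ} (h : l ≠ []) : 1 ≤ l.length := by
  cases l with
  | nil => exact absurd rfl h
  | cons a l => simp

/-- the vertex `[t+1]` is reached by time `N = 2m + t`. -/
lemma reach (hf : IsForest f t) (hcard : f.card = m + t + 1)
    (h0 : F 0 = [1]) (hstep : ∀ i < 2*m+t, FacialStep f F i) :
    ∃ i ≤ 2*m+t, F i = [t+1] := by
  by_contra hcon
  push_neg at hcon
  have hno : ∀ k ≤ 2*m+t, F k ≠ [t+1] := fun k hk => hcon k hk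
  have hmem := mem_of_ne hf h0 hstep (2*m+t) (le_refl _) hno (2*m+t) (le_refl _)
  have hid := contour_identity h0 hstep (2*m+t) (le_refl _)
  have hD := D_le hf hcard h0 hstep (2*m+t) (le_refl _)
  have hlen : 1 ≤ (F (2*m+t)).length :=
    length_pos_of_ne_nil (F_ne_nil h0 hstep (2*m+t) (le_refl _))
  have hhead := hmem.2
  omega

/-- exit lemma: if `v ≠ [t+1]` is visited before the first visit to `[t+1]`, then at some
visit of `v` before that time, `v` had no new child. -/
lemma exit_lemma (h0 : F 0 = [1]) (hstep : ∀ i < N, FacialStep f F i)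
    {i0 : ℕ} (hi0 : i0 ≤ N) (hFi0 : F i0 = [t+1])
    {v : List ℕ} (hv : v ≠ []) (hvne : v ≠ [t+1]) {k : ℕ} (hk : k ≤ i0) (hFk : F k = v) :
    ∃ k' < i0, F k' = v ∧ ¬ HasNewChild f F k' := by
  classical
  set k' := Nat.findGreatest (fun k' => F k' = v) i0 with hk'def
  have hspec : F k' = v := Nat.findGreatest_spec (P := fun a => F a = v) hk hFk
  have hk'le : k' ≤ i0 := Nat.findGreatest_le i0
  have hgr : ∀ a, k' < a → a ≤ i0 → F a ≠ v :=
    fun a h1 h2 => Nat.findGreatest_is_greatest h1 h2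
  have hk'lt : k' < i0 := by
    rcases Nat.lt_or_ge k' i0 with h | h
    · exact h
    · have : k' = i0 := by omega
      rw [this, hFi0] at hspec
      exact absurd hspec.symm hvne
  rcases hstep k' (by omega) with ⟨j, hj, hmem, hnew, hmin⟩ | ⟨h1, _, _⟩ | ⟨h1, _, _⟩
  · -- down step: the sequence stays strictly below `v` until `i0`, contradiction
    exfalso
    have key : ∀ d, k' + 1 + d ≤ i0 → v <+: F (k' + 1 + d) ∧ v ≠ F (k' + 1 + d) := by
      intro d
      induction d with
      | zero =>
        intro _
        constructor
        · rw [show k' + 1 + 0 = k' + 1 from rfl, hj, ← hspec]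
          exact List.prefix_append _ _
        · rw [show k' + 1 + 0 = k' + 1 from rfl, hj, ← hspec]
          intro hcon
          have := congrArg List.length hcon
          simp at this
      | succ d ih =>
        intro hd
        have ⟨hpre, hne⟩ := ih (by omega)
        have hlt : v.length < (F (k' + 1 + d)).length := by
          rcases Nat.lt_or_ge v.length (F (k' + 1 + d)).length with h | h
          · exact h
          · exact absurd (hpre.eq_of_length (le_antisymm hpre.length_le h)) hne
        have hstep' := hstep (k' + 1 + d) (by omega)
        have hsucc : k' + 1 + (d + 1) = (k' + 1 + d) + 1 := by omega
        rcases hstep' with ⟨j', hj', _⟩ | ⟨_, hl2, heq2⟩ | ⟨_, hl3, heq3⟩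
        · rw [hsucc, hj']
          constructor
          · exact hpre.trans (List.prefix_append _ _)
          · intro hcon
            have := congrArg List.length hcon
            simp at this
            omega
        · -- up step
          rcases Nat.lt_or_ge (v.length + 1) (F (k' + 1 + d)).length with hcase | hcase
          · rw [hsucc, heq2]
            have hp2 : v <+: (F (k' + 1 + d)).dropLast := by
              rw [List.dropLast_eq_take]
              exact (List.prefix_take_iff.mpr ⟨hpre, by omega⟩)
            refine ⟨hp2, fun hcon => ?_⟩
            have := congrArg List.length hcon
            rw [List.length_dropLast] at this
            omega
          · -- v = dropLast, so F (k'+1+d+1) = v, contradicting maximality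
            have hvlen : v.length = (F (k' + 1 + d)).length - 1 := by omega
            have hp2 : v <+: (F (k' + 1 + d)).dropLast := by
              rw [List.dropLast_eq_take]
              exact (List.prefix_take_iff.mpr ⟨hpre, by omega⟩)
            have hveq : v = (F (k' + 1 + d)).dropLast :=
              hp2.eq_of_length (by rw [List.length_dropLast]; omega)
            exfalso
            exact hgr (k' + 1 + d + 1) (by omega) (by omega)
              (by rw [heq2, ← hveq])
        · -- root step: impossible since |x| > |v| ≥ 1
          exfalso
          have := length_pos_of_ne_nil hv
          omega
    have hfin := key (i0 - k' - 1) (by omega)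
    rw [show k' + 1 + (i0 - k' - 1) = i0 by omega, hFi0] at hfin
    exact hfin.2 (prefix_singleton hfin.1 hv)
  · exact ⟨k', hk'lt, hspec, h1⟩
  · exact ⟨k', hk'lt, hspec, h1⟩

/-- completeness: by the first time `[t+1]` is visited, every vertex has been visited. -/
lemma complete (hf : IsForest f t) (h0 : F 0 = [1]) (hstep : ∀ i < N, FacialStep f F i)
    {i0 : ℕ} (hi0 : i0 ≤ N) (hFi0 : F i0 = [t+1]) :
    ∀ u ∈ f, ∃ k ≤ i0, F k = u := by
  have main : ∀ n, ∀ u ∈ f, u.length = n → ∃ k ≤ i0, F k = u := by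
    intro n
    induction n using Nat.strong_induction_on with
    | _ n ih =>
      intro u hu hlen
      have hune : u ≠ [] := hf.2.1 u hu
      rcases Nat.lt_or_ge u.length 2 with hshort | hlong
      · -- floor vertex
        have h1 := length_pos_of_ne_nil hune
        match u, h1 with
        | [a], _ =>
          have ha := (hf.2.2.1 a).mp hu
          have hh : (F i0).headI = t + 1 := by rw [hFi0]; rfl
          obtain ⟨k, hk, hkeq⟩ := roots_visited h0 hstep i0 hi0 a ha.1 (by omega)
          exact ⟨k, hk, hkeq⟩
        | (a :: b :: l), _ => simp at hshort
      · -- u has a parent v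
        set v := u.dropLast with hvdef
        have hvmem : v ∈ f := hf.2.2.2.1 u hu hlong
        have hvne : v ≠ [] := hf.2.1 v hvmem
        have hvlen : v.length < n := by
          rw [hvdef, List.length_dropLast]; omega
        obtain ⟨k, hk, hkeq⟩ := ih v.length hvlen v hvmem rfl
        have hvnet : v ≠ [t+1] := by
          intro hcon
          have hu' : v ++ [u.getLast hune] ∈ f := by
            rw [hvdef, List.dropLast_append_getLast hune]; exact hu
          rw [hcon] at hu'
          exact hf.2.2.2.2.2 (u.getLast hune) hu'
        obtain ⟨k', hk', hk'eq, hnc⟩ := exit_lemma h0 hstep hi0 hFi0 hvne hvnet hk hkeq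
        rw [HasNewChild] at hnc
        push_neg at hnc
        obtain ⟨k'', hk'', hk''eq⟩ := hnc (u.getLast hune)
          (by rw [hk'eq, hvdef, List.dropLast_append_getLast hune]; exact hu)
        exact ⟨k'', by omega, by rw [hk''eq, hk'eq, hvdef, List.dropLast_append_getLast hune]⟩
  intro u hu
  exact main u.length u hu rfl

/-- the first visit to `[t+1]` happens exactly at time `2m+t`. -/
lemma first_reach (hf : IsForest f t) (hcard : f.card = m + t + 1)
    (h0 : F 0 = [1]) (hstep : ∀ i < 2*m+t, FacialStep f F i) :
    F (2*m+t) = [t+1] ∧ ∀ k < 2*m+t, F k ≠ [t+1] := by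
  classical
  obtain ⟨i', hi', hFi'⟩ := reach hf hcard h0 hstep
  have hex : ∃ i, F i = [t+1] ∧ i ≤ 2*m+t := ⟨i', hFi', hi'⟩
  set i0 := Nat.find hex with hi0def
  obtain ⟨hFi0, hi0le⟩ := Nat.find_spec hex
  have hmin : ∀ k < i0, F k ≠ [t+1] := by
    intro k hk hcon
    exact Nat.find_min hex hk ⟨hcon, by omega⟩
  -- count down steps up to i0 from below
  have hcomp := complete hf h0 hstep hi0le hFi0
  have hsub : f.filter (fun u => 2 ≤ u.length) ⊆
      (((Finset.range i0).filter
        (fun k => (F (k+1)).length = (F k).length + 1)).image (fun k => F (k+1))) := by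
    intro u hu
    obtain ⟨hu, hul⟩ := Finset.mem_filter.mp hu
    obtain ⟨k, hk, hkeq⟩ := hcomp u hu
    -- take the first visit to u
    have hex2 : ∃ k, F k = u := ⟨k, hkeq⟩
    set k0 := Nat.find hex2 with hk0def
    have hk0eq : F k0 = u := Nat.find_spec hex2
    have hk0min : ∀ a < k0, F a ≠ u := fun a ha => Nat.find_min hex2 ha
    have hk0le : k0 ≤ k := Nat.find_min' hex2 hkeq
    have hk0pos : 1 ≤ k0 := by
      rcases Nat.eq_zero_or_pos k0 with h | h
      · rw [h, h0] at hk0eq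
        rw [← hk0eq] at hul
        simp at hul
      · exact h
    have hk0lt : k0 < i0 := by
      rcases Nat.lt_or_ge k0 i0 with h | h
      · exact h
      · have : k0 = i0 := by omega
        rw [this, hFi0] at hk0eq
        rw [← hk0eq] at hul
        simp at hul
    have hk1 : k0 - 1 < 2*m+t := by omega
    have hk1s : k0 - 1 + 1 = k0 := by omega
    rcases step_classify h0 hstep hk1 with ⟨_, hl, _⟩ | ⟨⟨_, hl2, heq2⟩, _, _⟩
      | ⟨⟨_, _, heq3⟩, hl3, _⟩
    · refine Finset.mem_image.mpr ⟨k0 - 1, ?_, by rw [hk1s, hk0eq]⟩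
      refine Finset.mem_filter.mpr ⟨Finset.mem_range.mpr (by omega), ?_⟩
      rw [hk1s] at hl ⊢
      exact hl
    · -- up step into the first visit: impossible (parent visited earlier)
      exfalso
      rw [hk1s] at heq2
      have hpre : u <+: F (k0 - 1) := by
        rw [← hk0eq, heq2]
        exact List.dropLast_prefix _
      have hune2 : u ≠ [] := by
        intro hcon; rw [hcon] at hul; simp at hul
      obtain ⟨a, ha, haeq⟩ := prefix_visited h0 hstep (k0-1) (by omega) u hune2 hpre
      exact hk0min a (by omega) haeq
    · -- root step lands on a floor vertex: impossible since |u| ≥ 2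
      exfalso
      rw [hk1s] at hl3
      rw [← hk0eq] at hul
      omega
  have hDge : m ≤ D F i0 := by
    calc m = (f.filter (fun u => 2 ≤ u.length)).card := (card_nonroot hf hcard).symm
      _ ≤ _ := Finset.card_le_card hsub
      _ ≤ D F i0 := Finset.card_image_le
  have hid := contour_identity h0 hstep i0 hi0le
  rw [hFi0] at hid
  simp only [List.length_singleton] at hid
  have hhead : ([t+1] : List ℕ).headI = t + 1 := rfl
  rw [hhead] at hid
  have hi0eq : i0 = 2*m+t := by omega
  constructor
  · rw [← hi0eq]; exact hFi0
  · intro k hk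
    exact hmin k (by omega)

/-- package of per-forest results. -/
lemma forest_results (hf : IsForest f t) (hcard : f.card = m + t + 1)
    (hF : IsFacialSeq f F (2*m+t)) :
    (∀ u ∈ f, ∃ k ≤ 2*m+t, F k = u) ∧ (∀ k ≤ 2*m+t, F k ∈ f) := by
  obtain ⟨h0, hstep⟩ := hF
  obtain ⟨hend, hmin⟩ := first_reach hf hcard h0 hstep
  constructor
  · exact complete hf h0 hstep (le_refl _) hend
  · intro k hk
    rcases Nat.lt_or_ge k (2*m+t) with h | h
    · exact (mem_of_ne hf h0 hstep k (by omega)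
        (fun k' hk' => hmin k' (by omega)) k (le_refl k)).1
    · have : k = 2*m+t := by omega
      rw [this, hend]
      exact (hf.2.2.1 (t+1)).mpr ⟨by omega, le_refl _⟩

end Forest

/-- the contour function determines the facial sequence. -/
lemma seq_eq {f₁ f₂ : Finset (List ℕ)} {t m : ℕ} {F₁ F₂ : ℕ → List ℕ}
    (hf₁ : IsForest f₁ t) (hf₂ : IsForest f₂ t)
    (hcard₁ : f₁.card = m + t + 1) (hcard₂ : f₂.card = m + t + 1)
    (hF₁ : IsFacialSeq f₁ F₁ (2*m+t)) (hF₂ : IsFacialSeq f₂ F₂ (2*m+t))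
    (hC : ∀ i ≤ 2*m+t,
      ((F₁ i).length : ℤ) - (F₁ i).headI = ((F₂ i).length : ℤ) - (F₂ i).headI) :
    ∀ i ≤ 2*m+t, F₁ i = F₂ i := by
  obtain ⟨h01, hstep₁⟩ := hF₁
  obtain ⟨h02, hstep₂⟩ := hF₂
  have main : ∀ i ≤ 2*m+t, ∀ k ≤ i, F₁ k = F₂ k := by
    intro i hi
    induction i with
    | zero =>
      intro k hk
      have : k = 0 := by omega
      rw [this, h01, h02]
    | succ n ih =>
      have hn : n < 2*m+t := by omega
      have IH : ∀ k ≤ n, F₁ k = F₂ k := ih (by omega)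
      intro k hk
      rcases Nat.lt_succ_iff_lt_or_eq.mp (Nat.lt_succ_of_le hk) with h | h
      · exact IH k (by omega)
      subst h
      have hu : F₂ n = F₁ n := (IH n (le_refl n)).symm
      have hmem₁ : F₁ n ∈ f₁ :=
        (forest_results hf₁ hcard₁ ⟨h01, hstep₁⟩).2 n (by omega)
      have hmem₂ : F₂ n ∈ f₂ :=
        (forest_results hf₂ hcard₂ ⟨h02, hstep₂⟩).2 n (by omega)
      have hne : F₁ n ≠ [] := hf₁.2.1 _ hmem₁
      have hlen1 : 1 ≤ (F₁ n).length := length_pos_of_ne_nil hne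
      have hCn := hC n (by omega)
      have hCn1 := hC (n+1) (by omega)
      rcases step_classify h01 hstep₁ hn with ⟨⟨j₁, hj₁, hm₁, hnew₁, hmin₁⟩, hl₁, hh₁⟩
        | ⟨⟨_, hl₁', heq₁⟩, hl₁, hh₁⟩ | ⟨⟨_, hl₁', heq₁⟩, hl₁, hh₁⟩ <;>
      rcases step_classify h02 hstep₂ hn with ⟨⟨j₂, hj₂, hm₂, hnew₂, hmin₂⟩, hl₂, hh₂⟩
        | ⟨⟨_, hl₂', heq₂⟩, hl₂, hh₂⟩ | ⟨⟨_, hl₂', heq₂⟩, hl₂, hh₂⟩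
      · -- both down steps
        rw [hu] at hj₂ hm₂ hnew₂ hmin₂
        obtain ⟨c₁, hc₁⟩ := hf₁.2.2.2.2.1 (F₁ n) hmem₁
        obtain ⟨c₂, hc₂⟩ := hf₂.2.2.2.2.1 (F₁ n) (hu ▸ hmem₂)
        have hj1c : 1 ≤ j₁ ∧ j₁ ≤ c₁ := (hc₁ j₁).mp hm₁
        have hj2c : 1 ≤ j₂ ∧ j₂ ≤ c₂ := (hc₂ j₂).mp hm₂
        have heqj : j₁ = j₂ := by
          rcases lt_trichotomy j₁ j₂ with h | h | h
          · exfalso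
            have hmem' : F₁ n ++ [j₁] ∈ f₂ := (hc₂ j₁).mpr ⟨hj1c.1, by omega⟩
            obtain ⟨a, ha, haeq⟩ := hmin₂ j₁ h hmem'
            exact hnew₁ a ha (by rw [IH a ha]; exact haeq)
          · exact h
          · exfalso
            have hmem' : F₁ n ++ [j₂] ∈ f₁ := (hc₁ j₂).mpr ⟨hj2c.1, by omega⟩
            obtain ⟨a, ha, haeq⟩ := hmin₁ j₂ h hmem'
            exact hnew₂ a ha (by rw [← IH a ha]; exact haeq)
        rw [hj₁, hj₂, heqj]
      · exfalso; omega
      · exfalso; omega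
      · exfalso; omega
      · rw [heq₁, heq₂, hu]
      · exfalso; rw [hu] at hl₂'; omega
      · exfalso; omega
      · exfalso; rw [hu] at hl₂'; omega
      · rw [heq₁, heq₂, hu]
  intro i hi
  exact main i hi i (le_refl i)

end ContourAux

/-- The contour pair determines the well-labeled forest: if two well-labeled forests
`(f₁, ℓ₁)` and `(f₂, ℓ₂)` (with `t₁`, `t₂` trees and `m₁`, `m₂` tree edges, facial sequences
`F₁`, `F₂`) have the same contour function `i ↦ |f(i)| + t − a(f(i))` and the same spatial
contour function `i ↦ ℓ(f(i))`, then they are equal. -/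
theorem contourPair_injective (f₁ f₂ : Finset (List ℕ)) (t₁ t₂ m₁ m₂ : ℕ)
    (ℓ₁ ℓ₂ : List ℕ → ℤ) (F₁ F₂ : ℕ → List ℕ)
    (hf₁ : IsForest f₁ t₁) (hf₂ : IsForest f₂ t₂)
    (hcard₁ : f₁.card = m₁ + t₁ + 1) (hcard₂ : f₂.card = m₂ + t₂ + 1)
    (hF₁ : IsFacialSeq f₁ F₁ (2 * m₁ + t₁)) (hF₂ : IsFacialSeq f₂ F₂ (2 * m₂ + t₂))
    (hℓ₁ : IsWellLabeled f₁ ℓ₁) (hℓ₂ : IsWellLabeled f₂ ℓ₂)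
    (hN : 2 * m₁ + t₁ = 2 * m₂ + t₂)
    (hC : ∀ i ≤ 2 * m₁ + t₁,
      ((F₁ i).length : ℤ) + t₁ - (F₁ i).headI = ((F₂ i).length : ℤ) + t₂ - (F₂ i).headI)
    (hL : ∀ i ≤ 2 * m₁ + t₁, ℓ₁ (F₁ i) = ℓ₂ (F₂ i)) :
    f₁ = f₂ ∧ t₁ = t₂ ∧ ∀ u ∈ f₁, ℓ₁ u = ℓ₂ u := by
  have ht : t₁ = t₂ := by
    have h := hC 0 (by omega)
    rw [hF₁.1, hF₂.1] at h
    simp [List.headI] at h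
    omega
  subst ht
  have hm : m₁ = m₂ := by omega
  subst hm
  have hseq := ContourAux.seq_eq hf₁ hf₂ hcard₁ hcard₂ hF₁ hF₂
    (fun i hi => by have := hC i hi; omega)
  have hres₁ := ContourAux.forest_results hf₁ hcard₁ hF₁
  have hres₂ := ContourAux.forest_results hf₂ hcard₂ hF₂
  refine ⟨?_, rfl, ?_⟩
  · ext u
    constructor
    · intro hu
      obtain ⟨k, hk, hkeq⟩ := hres₁.1 u hu
      rw [← hkeq, hseq k hk]
      exact hres₂.2 k hk
    · intro hu
      obtain ⟨k, hk, hkeq⟩ := hres₂.1 u hu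
      rw [← hkeq, ← hseq k hk]
      exact hres₁.2 k hk
  · intro u hu
    obtain ⟨k, hk, hkeq⟩ := hres₁.1 u hu
    have h := hL k hk
    rw [hkeq] at h
    rw [h, ← hseq k hk, hkeq]
end

section
/- Let f be a forest with σ trees and m tree edges, with facial sequence f(0),…,f(2m+σ) and contour function C_f(i) = |f(i)| + t(f) − a(f(i)). Then for every 0 ≤ i ≤ 2m+σ, the oldest ancestor satisfies a(f(i)) − 1 = σ − min_{0 ≤ j ≤ i} C_f(j). -/
/-!
Along the contour the oldest ancestor `a(f(i))` is constant except at the steps from one tree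
root to the next, where it increases by one and the contour value `C` drops to
`σ + 1 − a(f(i))`. Since `|f(i)| ≥ 1` gives `C i ≥ σ + 1 − a(f(i))` everywhere, the quantity
`σ + 1 − a(f(i))` is exactly the running minimum of `C`.
-/

open Finset

theorem min'_image_range_eq_of_step {α : Type*} [LinearOrder α] {C a : ℕ → α} {n : ℕ}
    (h0 : a 0 = C 0) (hle : ∀ i ≤ n, a i ≤ C i)
    (hstep : ∀ i < n, a (i + 1) = a i ∨ (a (i + 1) = C (i + 1) ∧ a (i + 1) ≤ a i)) :
    ((range (n + 1)).image C).min' (by simp) = a n := by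
  induction n with
  | zero => simp [h0]
  | succ n ih =>
    have hprev := ih (fun i hi => hle i (by omega)) (fun i hi => hstep i (by omega))
    have hins : ((range (n + 2)).image C).min' (by simp)
        = min (((range (n + 1)).image C).min' (by simp)) (C (n + 1)) := by
      simp only [range_add_one (n := n + 1), image_insert]
      rw [min'_insert, min_comm]
    rw [hins, hprev]
    rcases hstep n (by omega) with hstay | ⟨hdrop, hdown⟩
    · rw [hstay, min_eq_left (hstay ▸ hle (n + 1) le_rfl)]
    · rw [← hdrop, min_eq_right hdown]

namespace List

theorem headI_append_of_ne_nil {α : Type*} [Inhabited α] {l : List α} (h : l ≠ []) (l' : List α) :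
    (l ++ l').headI = l.headI := by
  cases l with
  | nil => exact absurd rfl h
  | cons _ _ => rfl

theorem headI_dropLast_of_two_le_length {α : Type*} [Inhabited α] {l : List α}
    (h : 2 ≤ l.length) : l.dropLast.headI = l.headI := by
  match l, h with
  | _ :: _ :: _, _ => rfl

end List

theorem FacialStep.headI_succ {f : Finset (List ℕ)} {F : ℕ → List ℕ} {i : ℕ}
    (hstep : FacialStep f F i) (hne : F i ≠ []) :
    F (i + 1) ≠ [] ∧ ((F (i + 1)).headI = (F i).headI ∨
      ((F (i + 1)).length = 1 ∧ (F (i + 1)).headI = (F i).headI + 1)) := by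
  rcases hstep with ⟨j, hchild, -⟩ | ⟨-, hlen, hparent⟩ | ⟨-, -, hnext⟩
  · rw [hchild]
    exact ⟨by simp, .inl (List.headI_append_of_ne_nil hne _)⟩
  · rw [hparent]
    refine ⟨fun h => ?_, .inl (List.headI_dropLast_of_two_le_length hlen)⟩
    have := congrArg List.length h
    simp only [List.length_dropLast, List.length_nil] at this
    omega
  · rw [hnext]
    exact ⟨by simp, .inr ⟨rfl, rfl⟩⟩

theorem IsFacialSeq.ne_nil {f : Finset (List ℕ)} {F : ℕ → List ℕ} {N : ℕ}
    (hF : IsFacialSeq f F N) : ∀ i ≤ N, F i ≠ [] := by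
  intro i hi
  induction i with
  | zero => simp [hF.1]
  | succ i ih => exact ((hF.2 i (by omega)).headI_succ (ih (by omega))).1

/-- For a forest `f` with `t = σ` trees and `m` tree edges, with facial sequence `F` and
contour function `C i = |f(i)| + t − a(f(i))` (where `a(u) = u₁` is the index of the tree
containing `u`), the oldest ancestor satisfies
`a(f(i)) − 1 = σ − min_{0 ≤ j ≤ i} C j` for every `0 ≤ i ≤ 2m + σ`. -/
theorem oldestAncestor_eq_of_contour (f : Finset (List ℕ)) (t m : ℕ)
    (F : ℕ → List ℕ) (hF : IsFacialSeq f F (2 * m + t))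
    (C : ℕ → ℤ) (hC : ∀ i, C i = ((F i).length : ℤ) + t - (F i).headI) :
    ∀ i ≤ 2 * m + t,
      ((F i).headI : ℤ) - 1 = (t : ℤ) - ((Finset.range (i + 1)).image C).min' (by simp) := by
  intro n hn
  have hne := hF.ne_nil
  rw [min'_image_range_eq_of_step (a := fun i => (t : ℤ) + 1 - (F i).headI)]
  · ring
  · simp [hC, hF.1]
  · intro i hi
    have hlen : 1 ≤ (F i).length := List.length_pos_iff.mpr (hne i (by omega))
    rw [hC]
    omega
  · intro i hi
    rcases ((hF.2 i (by omega)).headI_succ (hne i (by omega))).2 with hstay | ⟨hlen, hnext⟩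
    · exact .inl (by simp only [hstay])
    · refine .inr ⟨?_, ?_⟩
      · rw [hC, hlen, hnext]; push_cast; ring
      · simp only [hnext]; push_cast; omega
end
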